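/- Let $u:\mathbb{R}^n\to\mathbb{R}$ satisfy $|u(x)-u(0)-\rho\cdot x|\le C$ for all $x\in\mathbb{R}^n$, and suppose the family of translates $T_{\bar k}u$, $\bar k\in\mathbb{Z}^{n+1}$, is totally ordered in the sense that for each $\bar k$, either $T_{\bar k}u>u$ everywhere, $T_{\bar k}u<u$ everywhere, or $T_{\bar k}u=u$. Then for every $\bar k=(k,k_{n+1})\in\mathbb{Z}^{n+1}$ with $k_{n+1}-k\cdot\rho>0$ one has $T_{\bar k}u>u$ everywhere. -/
import Mathlib


theorem stmt_1 (n : ℕ) (u : (Fin n → ℝ) → ℝ) (ρ : Fin n → ℝ) (C : ℝ) (hC : 0 ≤ C)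
    (hbound : ∀ x : Fin n → ℝ, |u x - u 0 - ∑ i, ρ i * x i| ≤ C)
    (hord : ∀ (k : Fin n → ℤ) (kn1 : ℤ),
      (∀ x, u (x - fun i => (k i : ℝ)) + (kn1 : ℝ) > u x) ∨
      (∀ x, u (x - fun i => (k i : ℝ)) + (kn1 : ℝ) < u x) ∨
      (∀ x, u (x - fun i => (k i : ℝ)) + (kn1 : ℝ) = u x)) :
    ∀ (k : Fin n → ℤ) (kn1 : ℤ), 0 < (kn1 : ℝ) - ∑ i, (k i : ℝ) * ρ i →
      ∀ x, u (x - fun i => (k i : ℝ)) + (kn1 : ℝ) > u x := by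
  intro k kn1 hpos
  set δ : ℝ := (kn1 : ℝ) - ∑ i, (k i : ℝ) * ρ i with hδ
  -- reduce to showing the other two alternatives are impossible
  rcases hord k kn1 with h | h | h
  · exact h
  all_goals {
    exfalso
    -- in either case, ∀ x, u (x - k) + kn1 ≤ u x
    have hle : ∀ x, u (x - fun i => (k i : ℝ)) + (kn1 : ℝ) ≤ u x := by
      intro x
      first
        | exact le_of_lt (h x)
        | exact le_of_eq (h x)
    have hiter : ∀ m : ℕ, ∀ x, u (x - fun i => (m : ℝ) * (k i : ℝ)) + (m : ℝ) * kn1 ≤ u x := by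
      intro m
      induction m with
      | zero =>
        intro x
        have hx0 : (x - fun _ : Fin n => ((0:ℕ) : ℝ) * (0:ℝ)) = x := by
          funext i; simp
        have : (x - fun i => ((0:ℕ) : ℝ) * (k i : ℝ)) = x := by
          funext i; simp
        rw [this]; simp
      | succ m ih =>
        intro x
        have hx : (x - fun i => ((m : ℝ) + 1) * (k i : ℝ))
            = ((x - fun i => (m : ℝ) * (k i : ℝ)) - fun i => (k i : ℝ)) := by
          funext i
          simp [Pi.sub_apply]
          ring
        have h1 := hle (x - fun i => (m : ℝ) * (k i : ℝ))
        have h2 := ih x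
        push_cast
        rw [hx]
        linarith
    obtain ⟨m, hm⟩ := exists_nat_gt (C / δ)
    have hmδ : C < (m : ℝ) * δ := by
      rw [div_lt_iff₀ hpos] at hm
      linarith
    have h0 := hiter m 0
    have hb := hbound ((0 : Fin n → ℝ) - fun i => (m : ℝ) * (k i : ℝ))
    have hsum : (∑ i, ρ i * (((0 : Fin n → ℝ) - fun i => (m : ℝ) * (k i : ℝ)) i))
        = -(m : ℝ) * ∑ i, (k i : ℝ) * ρ i := by
      rw [Finset.mul_sum]
      apply Finset.sum_congr rfl
      intro i _
      simp [Pi.sub_apply]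
      ring
    rw [hsum] at hb
    rw [abs_le] at hb
    have := hb.2
    -- u(-mk) - u 0 + m * ∑ k ρ ≤ C ; and m*kn1 ≤ u 0 - u(-mk)
    nlinarith [hb.1, hb.2, h0]
  }
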